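/- Let k be a field and for α in k let H_α be the representation of the quiver Ẽ7 (with 5 source vertices of dimensions 2, 3, 3, 1, 1 and 3 sink vertices of dimensions 4, 2, 2) given by the linear maps A_1 : k^2 → k^4, A_2 : k^3 → k^4, A_3 : k^3 → k^4, B_1 : k^3 → k^2, C_1 : k^3 → k^2, B_2 : k^1 → k^2, C_2 : k^1 → k^2 with matrices A_1 = [[1,α],[1,1],[1,0],[0,1]], A_2 = [[1,0,0],[0,1,0],[0,0,1],[0,0,0]], A_3 = [[0,0,0],[0,0,1],[0,1,0],[1,0,0]], B_1 = C_1 = [[0,1,0],[0,0,1]], B_2 = C_2 = [[1],[0]]. Then each H_α is an indecomposable representation in which A_1, A_2, A_3, B_2, C_2 are injective and B_1, C_1 are surjective, and H_α is isomorphic to H_β only if α = β; in particular, Ẽ7 admits infinitely many pairwise nonisomorphic indecomposable representations of this form when k is infinite. -/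

import Mathlib

universe u

/-- A representation of the quiver `Ẽ₇` with the orientation used in the paper:
five source vertices of dimensions `r1, …, r5`, three sink vertices of dimensions
`t1, t2, t3`, and seven structure maps given by matrices. -/
structure RepE7 (k : Type u) [Field k] where
  r1 : ℕ
  r2 : ℕ
  r3 : ℕ
  r4 : ℕ
  r5 : ℕ
  t1 : ℕ
  t2 : ℕ
  t3 : ℕ
  A1 : Matrix (Fin t1) (Fin r1) k
  A2 : Matrix (Fin t1) (Fin r2) k
  B1 : Matrix (Fin t2) (Fin r2) k
  A3 : Matrix (Fin t1) (Fin r3) k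
  C1 : Matrix (Fin t3) (Fin r3) k
  B2 : Matrix (Fin t2) (Fin r4) k
  C2 : Matrix (Fin t3) (Fin r5) k

namespace RepE7

variable {k : Type u} [Field k]

/-- A (possibly rectangular) matrix is invertible if it has a two-sided inverse. -/
def TwoInv {m n : ℕ} (P : Matrix (Fin m) (Fin n) k) : Prop :=
  ∃ Q : Matrix (Fin n) (Fin m) k, P * Q = 1 ∧ Q * P = 1

/-- Isomorphism of representations of `Ẽ₇`: an invertible linear map at each of the
eight vertices commuting with the seven structure maps. -/
def IsoRep (H H' : RepE7 k) : Prop :=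
  ∃ (P1 : Matrix (Fin H'.r1) (Fin H.r1) k) (P2 : Matrix (Fin H'.r2) (Fin H.r2) k)
    (P3 : Matrix (Fin H'.r3) (Fin H.r3) k) (P4 : Matrix (Fin H'.r4) (Fin H.r4) k)
    (P5 : Matrix (Fin H'.r5) (Fin H.r5) k) (Q1 : Matrix (Fin H'.t1) (Fin H.t1) k)
    (Q2 : Matrix (Fin H'.t2) (Fin H.t2) k) (Q3 : Matrix (Fin H'.t3) (Fin H.t3) k),
    Q1 * H.A1 = H'.A1 * P1 ∧ Q1 * H.A2 = H'.A2 * P2 ∧ Q2 * H.B1 = H'.B1 * P2 ∧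
    Q1 * H.A3 = H'.A3 * P3 ∧ Q3 * H.C1 = H'.C1 * P3 ∧ Q2 * H.B2 = H'.B2 * P4 ∧
    Q3 * H.C2 = H'.C2 * P5 ∧
    TwoInv P1 ∧ TwoInv P2 ∧ TwoInv P3 ∧ TwoInv P4 ∧ TwoInv P5 ∧
    TwoInv Q1 ∧ TwoInv Q2 ∧ TwoInv Q3

/-- block direct sum of two matrices, reindexed to `Fin` of sums. -/
def bsum {m n m' n' : ℕ} (P : Matrix (Fin m) (Fin n) k) (P' : Matrix (Fin m') (Fin n') k) :
    Matrix (Fin (m + m')) (Fin (n + n')) k :=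
  (Matrix.fromBlocks P 0 0 P').submatrix finSumFinEquiv.symm finSumFinEquiv.symm

/-- vertexwise direct sum of two representations. -/
def dsum (H H' : RepE7 k) : RepE7 k where
  r1 := H.r1 + H'.r1
  r2 := H.r2 + H'.r2
  r3 := H.r3 + H'.r3
  r4 := H.r4 + H'.r4
  r5 := H.r5 + H'.r5
  t1 := H.t1 + H'.t1
  t2 := H.t2 + H'.t2
  t3 := H.t3 + H'.t3
  A1 := bsum H.A1 H'.A1
  A2 := bsum H.A2 H'.A2
  B1 := bsum H.B1 H'.B1
  A3 := bsum H.A3 H'.A3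
  C1 := bsum H.C1 H'.C1
  B2 := bsum H.B2 H'.B2
  C2 := bsum H.C2 H'.C2

/-- nonzero representation. -/
def Nonzero (H : RepE7 k) : Prop :=
  ¬ (H.r1 = 0 ∧ H.r2 = 0 ∧ H.r3 = 0 ∧ H.r4 = 0 ∧ H.r5 = 0 ∧
     H.t1 = 0 ∧ H.t2 = 0 ∧ H.t3 = 0)

/-- indecomposable representation: nonzero and not isomorphic to a direct sum of two
nonzero representations. -/
def Indec (H : RepE7 k) : Prop :=
  Nonzero H ∧ ∀ H₁ H₂ : RepE7 k, Nonzero H₁ → Nonzero H₂ → ¬ IsoRep H (dsum H₁ H₂)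

end RepE7

/-- the representation `H_α` of `Ẽ₇` from the proof of Lemma 8. -/
noncomputable def Hrep {k : Type u} [Field k] (α : k) : RepE7 k where
  r1 := 2
  r2 := 3
  r3 := 3
  r4 := 1
  r5 := 1
  t1 := 4
  t2 := 2
  t3 := 2
  A1 := !![1, α; 1, 1; 1, 0; 0, 1]
  A2 := !![1, 0, 0; 0, 1, 0; 0, 0, 1; 0, 0, 0]
  B1 := !![0, 1, 0; 0, 0, 1]
  A3 := !![0, 0, 0; 0, 0, 1; 0, 1, 0; 1, 0, 0]
  C1 := !![0, 1, 0; 0, 0, 1]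
  B2 := !![1; 0]
  C2 := !![1; 0]

/-! The vertex maps of any morphism `H_α → H_β` are one common scalar `c` with
`(α - β) c = 0`. Hence `H_α ≇ H_β` for `α ≠ β`, and since `End H_α = k` contains no
idempotents other than `0` and `1`, `H_α` is indecomposable. -/

namespace Matrix

variable {R : Type*} [CommSemiring R] {l m n p : Type*}

theorem mulVecLin_injective_of_mul_eq_one [Fintype m] [Fintype n] [DecidableEq n]
    {L : Matrix n m R} {A : Matrix m n R} (h : L * A = 1) : Function.Injective A.mulVecLin :=
  Function.LeftInverse.injective (g := L.mulVecLin) fun x => by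
    simp [mulVec_mulVec, h]

theorem mulVecLin_surjective_of_mul_eq_one [Fintype m] [Fintype n] [DecidableEq m]
    {B : Matrix m n R} {S : Matrix n m R} (h : B * S = 1) : Function.Surjective B.mulVecLin :=
  fun y => ⟨S *ᵥ y, by simp [mulVec_mulVec, h]⟩

theorem eq_smul_one_right_of_mul_eq_mul [Fintype m] [Fintype n]
    [DecidableEq m] [DecidableEq n] {A A' : Matrix m n R}
    {L : Matrix n m R} {P : Matrix n n R} {Q : Matrix m m R} {c : R}
    (hA : L * A = 1) (hA' : L * A' = 1) (h : Q * A = A' * P) (hQ : Q = c • 1) :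
    P = c • 1 :=
  calc P = L * A' * P := by rw [hA', Matrix.one_mul]
    _ = L * (Q * A) := by rw [h, Matrix.mul_assoc]
    _ = c • 1 := by rw [hQ, Matrix.smul_mul, Matrix.one_mul, Matrix.mul_smul, hA]

theorem eq_smul_one_left_of_mul_eq_mul [Fintype m] [Fintype n]
    [DecidableEq m] [DecidableEq n] {B B' : Matrix m n R}
    {S : Matrix n m R} {P : Matrix n n R} {Q : Matrix m m R} {c : R}
    (hB : B * S = 1) (hB' : B' * S = 1) (h : Q * B = B' * P) (hP : P = c • 1) :
    Q = c • 1 :=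
  calc Q = Q * B * S := by rw [Matrix.mul_assoc, hB, Matrix.mul_one]
    _ = B' * P * S := by rw [h]
    _ = c • 1 := by rw [hP, Matrix.mul_smul, Matrix.mul_one, Matrix.smul_mul, hB']

theorem conj_mul_eq_mul_conj [Fintype l] [Fintype m] [Fintype n] [Fintype p]
    [DecidableEq l] [DecidableEq m] {Q : Matrix p m R} {Q' : Matrix m p R}
    {P : Matrix l n R} {P' : Matrix n l R} {A : Matrix m n R} {A' : Matrix p l R}
    {E : Matrix p p R} {E' : Matrix l l R}
    (hQ : Q' * Q = 1) (hP : P * P' = 1) (h : Q * A = A' * P) (hE : E * A' = A' * E') :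
    Q' * E * Q * A = A * (P' * E' * P) := by
  have hA : Q' * A' = A * P' :=
    calc Q' * A' = Q' * (A' * (P * P')) := by rw [hP, Matrix.mul_one]
      _ = Q' * Q * A * P' := by rw [← Matrix.mul_assoc A', ← h]; simp only [Matrix.mul_assoc]
      _ = A * P' := by rw [hQ, Matrix.one_mul]
  calc Q' * E * Q * A = Q' * (E * A') * P := by simp only [Matrix.mul_assoc, h]
    _ = Q' * A' * (E' * P) := by rw [hE]; simp only [Matrix.mul_assoc]
    _ = A * (P' * E' * P) := by rw [hA]; simp only [Matrix.mul_assoc]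

theorem eq_smul_one_of_conj_eq_smul_one [Fintype m] [Fintype p] [DecidableEq m]
    [DecidableEq p] {Q : Matrix m p R} {Q' : Matrix p m R} {E : Matrix m m R} {c : R}
    (hQ : Q * Q' = 1) (h : Q' * E * Q = c • 1) : E = c • 1 :=
  calc E = Q * Q' * E * (Q * Q') := by rw [hQ, Matrix.one_mul, Matrix.mul_one]
    _ = Q * (Q' * E * Q) * Q' := by simp only [Matrix.mul_assoc]
    _ = c • 1 := by rw [h, Matrix.mul_smul, Matrix.mul_one, Matrix.smul_mul, hQ]

end Matrix

namespace RepE7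

variable {k : Type u} [Field k]

theorem bsum_mul {m n p m' n' p' : ℕ} (A : Matrix (Fin m) (Fin n) k)
    (A' : Matrix (Fin m') (Fin n') k) (B : Matrix (Fin n) (Fin p) k)
    (B' : Matrix (Fin n') (Fin p') k) :
    bsum A A' * bsum B B' = bsum (A * B) (A' * B') := by
  simp [bsum, Matrix.submatrix_mul_equiv, Matrix.fromBlocks_multiply]

theorem bsum_one_zero_mul_comm {m n m' n' : ℕ} (A : Matrix (Fin m) (Fin n) k)
    (A' : Matrix (Fin m') (Fin n') k) :
    bsum (1 : Matrix (Fin m) (Fin m) k) (0 : Matrix (Fin m') (Fin m') k) * bsum A A' =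
      bsum A A' * bsum (1 : Matrix (Fin n) (Fin n) k) (0 : Matrix (Fin n') (Fin n') k) := by
  simp [bsum_mul]

theorem eq_zero_of_twoInv_zero {m n : ℕ} (h : TwoInv (0 : Matrix (Fin m) (Fin n) k)) :
    m = 0 := by
  obtain ⟨Q, hQ, -⟩ := h
  by_contra hm
  have := congrFun₂ hQ ⟨0, Nat.pos_of_ne_zero hm⟩ ⟨0, Nat.pos_of_ne_zero hm⟩
  simp at this

theorem dims_eq_zero_of_bsum_one_zero_eq_smul_one {m m' : ℕ} {c : k}
    (h : bsum (1 : Matrix (Fin m) (Fin m) k) (0 : Matrix (Fin m') (Fin m') k) = c • 1) :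
    (c ≠ 1 → m = 0) ∧ (c ≠ 0 → m' = 0) := by
  constructor
  · refine fun hc => Nat.eq_zero_of_not_pos fun hm => hc ?_
    have := congrFun₂ h (Fin.castAdd m' ⟨0, hm⟩) (Fin.castAdd m' ⟨0, hm⟩)
    rw [bsum, Matrix.submatrix_apply, finSumFinEquiv_symm_apply_castAdd,
      Matrix.fromBlocks_apply₁₁] at this
    simpa [eq_comm] using this
  · refine fun hc => Nat.eq_zero_of_not_pos fun hm => hc ?_
    have := congrFun₂ h (Fin.natAdd m ⟨0, hm⟩) (Fin.natAdd m ⟨0, hm⟩)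
    rw [bsum, Matrix.submatrix_apply, finSumFinEquiv_symm_apply_natAdd,
      Matrix.fromBlocks_apply₂₂] at this
    simpa [eq_comm] using this

end RepE7

section Hrep

variable {k : Type u} [Field k]

open Matrix RepE7

theorem hrep_A1_leftInverse (α : k) :
    !![(0 : k), 0, 1, 0; 0, 0, 0, 1] * !![1, α; 1, 1; 1, 0; 0, 1] = 1 := by
  ext i j; fin_cases i <;> fin_cases j <;> simp [Matrix.mul_apply, Fin.sum_univ_succ]

theorem hrep_A2_leftInverse :
    !![(1 : k), 0, 0, 0; 0, 1, 0, 0; 0, 0, 1, 0] *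
      !![(1 : k), 0, 0; 0, 1, 0; 0, 0, 1; 0, 0, 0] = 1 := by
  ext i j; fin_cases i <;> fin_cases j <;> simp [Matrix.mul_apply, Fin.sum_univ_succ]

theorem hrep_A3_leftInverse :
    !![(0 : k), 0, 0, 1; 0, 0, 1, 0; 0, 1, 0, 0] *
      !![(0 : k), 0, 0; 0, 0, 1; 0, 1, 0; 1, 0, 0] = 1 := by
  ext i j; fin_cases i <;> fin_cases j <;> simp [Matrix.mul_apply, Fin.sum_univ_succ]

theorem hrep_B2_leftInverse : !![(1 : k), 0] * !![(1 : k); 0] = 1 := by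
  ext i j; fin_cases i; fin_cases j; simp [Matrix.mul_apply]

theorem hrep_B1_rightInverse :
    !![(0 : k), 1, 0; 0, 0, 1] * !![(0 : k), 0; 1, 0; 0, 1] = 1 := by
  ext i j; fin_cases i <;> fin_cases j <;> simp [Matrix.mul_apply, Fin.sum_univ_succ]

theorem hrep_intertwiner_eq_smul_one (α β : k)
    (P1 : Matrix (Fin 2) (Fin 2) k) (P2 P3 : Matrix (Fin 3) (Fin 3) k)
    (P4 P5 : Matrix (Fin 1) (Fin 1) k) (Q1 : Matrix (Fin 4) (Fin 4) k)
    (Q2 Q3 : Matrix (Fin 2) (Fin 2) k)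
    (h1 : Q1 * !![1, α; 1, 1; 1, 0; 0, 1] = !![1, β; 1, 1; 1, 0; 0, 1] * P1)
    (h2 : Q1 * !![(1 : k), 0, 0; 0, 1, 0; 0, 0, 1; 0, 0, 0] =
      !![(1 : k), 0, 0; 0, 1, 0; 0, 0, 1; 0, 0, 0] * P2)
    (h3 : Q2 * !![(0 : k), 1, 0; 0, 0, 1] = !![(0 : k), 1, 0; 0, 0, 1] * P2)
    (h4 : Q1 * !![(0 : k), 0, 0; 0, 0, 1; 0, 1, 0; 1, 0, 0] =
      !![(0 : k), 0, 0; 0, 0, 1; 0, 1, 0; 1, 0, 0] * P3)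
    (h5 : Q3 * !![(0 : k), 1, 0; 0, 0, 1] = !![(0 : k), 1, 0; 0, 0, 1] * P3)
    (h6 : Q2 * !![(1 : k); 0] = !![(1 : k); 0] * P4)
    (h7 : Q3 * !![(1 : k); 0] = !![(1 : k); 0] * P5) :
    ∃ c : k, (α - β) * c = 0 ∧ P1 = c • 1 ∧ P2 = c • 1 ∧ P3 = c • 1 ∧ P4 = c • 1 ∧
      P5 = c • 1 ∧ Q1 = c • 1 ∧ Q2 = c • 1 ∧ Q3 = c • 1 := by
  -- `Q1` preserves the lines `A2 (ker B1) = ⟨e₀⟩`, `A3 (ker C1) = ⟨e₃⟩`,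
  -- `A2 (B1⁻¹ (im B2)) ∩ im A3 = ⟨e₁⟩` and `A3 (C1⁻¹ (im C2)) ∩ im A2 = ⟨e₂⟩`, so it is
  -- diagonal; mapping `im A1` for `α` into `im A1` for `β` makes it scalar.
  obtain ⟨hQ1, hαβ⟩ : Q1 = Q1 0 0 • 1 ∧ (α - β) * Q1 0 0 = 0 := by
    simp only [← Matrix.ext_iff, Fin.forall_fin_succ, Matrix.mul_apply, Fin.sum_univ_succ,
      Fin.sum_univ_zero, IsEmpty.forall_iff, and_true] at h1 h2 h3 h4 h5 h6 h7
    simp at h1 h2 h3 h4 h5 h6 h7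
    refine ⟨?_, by grind⟩
    ext i j
    fin_cases i <;> fin_cases j <;> simp <;> grind
  have hP1 := eq_smul_one_right_of_mul_eq_mul (hrep_A1_leftInverse α)
    (hrep_A1_leftInverse β) h1 hQ1
  have hP2 := eq_smul_one_right_of_mul_eq_mul hrep_A2_leftInverse
    hrep_A2_leftInverse h2 hQ1
  have hP3 := eq_smul_one_right_of_mul_eq_mul hrep_A3_leftInverse
    hrep_A3_leftInverse h4 hQ1
  have hQ2 := eq_smul_one_left_of_mul_eq_mul hrep_B1_rightInverse
    hrep_B1_rightInverse h3 hP2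
  have hQ3 := eq_smul_one_left_of_mul_eq_mul hrep_B1_rightInverse
    hrep_B1_rightInverse h5 hP3
  have hP4 := eq_smul_one_right_of_mul_eq_mul hrep_B2_leftInverse
    hrep_B2_leftInverse h6 hQ2
  have hP5 := eq_smul_one_right_of_mul_eq_mul hrep_B2_leftInverse
    hrep_B2_leftInverse h7 hQ3
  exact ⟨_, hαβ, hP1, hP2, hP3, hP4, hP5, hQ1, hQ2, hQ3⟩

theorem eq_of_isoRep_hrep {α β : k} (h : IsoRep (Hrep α) (Hrep β)) : α = β := by
  obtain ⟨P1, P2, P3, P4, P5, Q1, Q2, Q3, h1, h2, h3, h4, h5, h6, h7, -, -, -, -, -, -,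
    hQ2inv, -⟩ := h
  obtain ⟨c, hαβ, -, -, -, -, -, -, rfl, -⟩ :=
    hrep_intertwiner_eq_smul_one α β P1 P2 P3 P4 P5 Q1 Q2 Q3 h1 h2 h3 h4 h5 h6 h7
  by_contra hne
  rw [(mul_eq_zero.1 hαβ).resolve_left (sub_ne_zero.2 hne), zero_smul] at hQ2inv
  exact two_ne_zero (eq_zero_of_twoInv_zero hQ2inv)

theorem indec_hrep (α : k) : (Hrep α).Indec := by
  refine ⟨by simp [Nonzero, Hrep], fun H₁ H₂ hH₁ hH₂ hiso => ?_⟩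
  obtain ⟨P1, P2, P3, P4, P5, Q1, Q2, Q3, h1, h2, h3, h4, h5, h6, h7, ⟨P1', hP1, -⟩,
    ⟨P2', hP2, -⟩, ⟨P3', hP3, -⟩, ⟨P4', hP4, -⟩, ⟨P5', hP5, -⟩, ⟨Q1', hQ1, hQ1'⟩,
    ⟨Q2', hQ2, hQ2'⟩, ⟨Q3', hQ3, hQ3'⟩⟩ := hiso
  -- Pulled back to `H_α`, the projection of `H₁ ⊕ H₂` onto `H₁` is a scalar `c`.
  obtain ⟨c, -, e1, e2, e3, e4, e5, e6, e7, e8⟩ := hrep_intertwiner_eq_smul_one α α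
    _ _ _ _ _ _ _ _
    (conj_mul_eq_mul_conj hQ1' hP1 h1 (bsum_one_zero_mul_comm _ _))
    (conj_mul_eq_mul_conj hQ1' hP2 h2 (bsum_one_zero_mul_comm _ _))
    (conj_mul_eq_mul_conj hQ2' hP2 h3 (bsum_one_zero_mul_comm _ _))
    (conj_mul_eq_mul_conj hQ1' hP3 h4 (bsum_one_zero_mul_comm _ _))
    (conj_mul_eq_mul_conj hQ3' hP3 h5 (bsum_one_zero_mul_comm _ _))
    (conj_mul_eq_mul_conj hQ2' hP4 h6 (bsum_one_zero_mul_comm _ _))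
    (conj_mul_eq_mul_conj hQ3' hP5 h7 (bsum_one_zero_mul_comm _ _))
  have d1 := dims_eq_zero_of_bsum_one_zero_eq_smul_one
    (eq_smul_one_of_conj_eq_smul_one hP1 e1)
  have d2 := dims_eq_zero_of_bsum_one_zero_eq_smul_one
    (eq_smul_one_of_conj_eq_smul_one hP2 e2)
  have d3 := dims_eq_zero_of_bsum_one_zero_eq_smul_one
    (eq_smul_one_of_conj_eq_smul_one hP3 e3)
  have d4 := dims_eq_zero_of_bsum_one_zero_eq_smul_one
    (eq_smul_one_of_conj_eq_smul_one hP4 e4)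
  have d5 := dims_eq_zero_of_bsum_one_zero_eq_smul_one
    (eq_smul_one_of_conj_eq_smul_one hP5 e5)
  have d6 := dims_eq_zero_of_bsum_one_zero_eq_smul_one
    (eq_smul_one_of_conj_eq_smul_one hQ1 e6)
  have d7 := dims_eq_zero_of_bsum_one_zero_eq_smul_one
    (eq_smul_one_of_conj_eq_smul_one hQ2 e7)
  have d8 := dims_eq_zero_of_bsum_one_zero_eq_smul_one
    (eq_smul_one_of_conj_eq_smul_one hQ3 e8)
  by_cases hc : c = 0
  · have hc1 : c ≠ 1 := hc ▸ zero_ne_one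
    exact hH₁
      ⟨d1.1 hc1, d2.1 hc1, d3.1 hc1, d4.1 hc1, d5.1 hc1, d6.1 hc1, d7.1 hc1, d8.1 hc1⟩
  · exact hH₂ ⟨d1.2 hc, d2.2 hc, d3.2 hc, d4.2 hc, d5.2 hc, d6.2 hc, d7.2 hc, d8.2 hc⟩

end Hrep

/-- The family `H_α` consists of indecomposable representations of `Ẽ₇` with `A1, A2,
A3, B2, C2` injective and `B1, C1` surjective, pairwise nonisomorphic for distinct
parameters; in particular `Ẽ₇` has infinitely many pairwise nonisomorphic
indecomposable representations of this form when `k` is infinite. -/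
theorem E7_infinite_family (k : Type u) [Field k] :
    (∀ α : k, (Hrep α).Indec ∧
      Function.Injective (Hrep α).A1.mulVecLin ∧
      Function.Injective (Hrep α).A2.mulVecLin ∧
      Function.Injective (Hrep α).A3.mulVecLin ∧
      Function.Injective (Hrep α).B2.mulVecLin ∧
      Function.Injective (Hrep α).C2.mulVecLin ∧
      Function.Surjective (Hrep α).B1.mulVecLin ∧
      Function.Surjective (Hrep α).C1.mulVecLin) ∧
    (∀ α β : k, RepE7.IsoRep (Hrep α) (Hrep β) → α = β) ∧
    (Infinite k → ∃ g : ℕ → k, ∀ m n : ℕ, m ≠ n →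
      ¬ RepE7.IsoRep (Hrep (g m)) (Hrep (g n))) := by
  refine ⟨fun α => ⟨indec_hrep α, ?_, ?_, ?_, ?_, ?_, ?_, ?_⟩, fun _ _ => eq_of_isoRep_hrep,
    fun _ => ?_⟩
  · exact Matrix.mulVecLin_injective_of_mul_eq_one (hrep_A1_leftInverse α)
  · exact Matrix.mulVecLin_injective_of_mul_eq_one hrep_A2_leftInverse
  · exact Matrix.mulVecLin_injective_of_mul_eq_one hrep_A3_leftInverse
  · exact Matrix.mulVecLin_injective_of_mul_eq_one hrep_B2_leftInverse
  · exact Matrix.mulVecLin_injective_of_mul_eq_one hrep_B2_leftInverse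
  · exact Matrix.mulVecLin_surjective_of_mul_eq_one hrep_B1_rightInverse
  · exact Matrix.mulVecLin_surjective_of_mul_eq_one hrep_B1_rightInverse
  · exact ⟨Infinite.natEmbedding k, fun m n hmn h =>
      hmn ((Infinite.natEmbedding k).injective (eq_of_isoRep_hrep h))⟩
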